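/- Let L be an algebraic lattice whose join-semilattice of compact elements is dually pseudo-complemented. The following are equivalent: (i) a = (a + c) ⊓ (a + c*) for every a ∈ L and compact c; (ii) every meet-irreducible a ≠ 1 is a coatom (i.e., [a,1] = {a,1}); (iii) every completely meet-irreducible a is a coatom. -/

import Mathlib

/-!
Write `c*` for `star c`. Since `⊤ = ⊥ ⊔ ⊥*` is compact, `m ⊔ c = ⊤` with `c` compact forces
`c* ≤ m`: compactness of `⊤` yields a compact `b ≤ m` with `c ⊔ b = ⊤`, and `c* ≤ b`.

(i) ⇒ (ii): if `a` is meet-irreducible and `a < x`, pick a compact `c ≤ x` with `c ≰ a`.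
Irreducibility of `a = (a ⊔ c) ⊓ (a ⊔ c*)` gives `c* ≤ a`, so `⊤ = c ⊔ c* ≤ x`.
(iii) ⇒ (i): if some compact `d ≤ (a ⊔ c) ⊓ (a ⊔ c*)` is not below `a`, Zorn's lemma gives
`m ≥ a` maximal with `d ≰ m`, and such an `m` is completely meet-irreducible, hence a coatom.
Then either `c ≤ m` or `c* ≤ m`, and in both cases `d ≤ m`.
-/

open CompleteLattice

section

variable {L : Type*} [CompleteLattice L]

theorem isCompactElement_bot : IsCompactElement (⊥ : L) := by
  simpa using isCompactElement_finsetSup (f := id) (∅ : Finset L) (by simp)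

theorem IsCompactElement.sup {a b : L} (ha : IsCompactElement a) (hb : IsCompactElement b) :
    IsCompactElement (a ⊔ b) := by
  classical
  simpa using isCompactElement_finsetSup (f := id) {a, b} (by simp [ha, hb])

def CompletelyInfIrred (a : L) : Prop :=
  ∀ X : Set L, a = sInf X → a ∈ X

theorem CompletelyInfIrred.ne_top {a : L} (ha : CompletelyInfIrred a) : a ≠ ⊤ :=
  fun h => ha ∅ (by rw [sInf_empty, h])

theorem CompletelyInfIrred.eq_or_eq_of_eq_inf {a : L} (ha : CompletelyInfIrred a) {x y : L}
    (h : a = x ⊓ y) : a = x ∨ a = y :=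
  ha {x, y} (by rw [sInf_pair, h])

theorem completelyInfIrred_of_maximal_not_le {d m : L} (hm : Maximal (fun x => ¬d ≤ x) m) :
    CompletelyInfIrred m := by
  intro X hX
  by_contra hmX
  refine hm.prop (hX ▸ le_sInf fun x hx => ?_)
  have hmx : m ≤ x := hX ▸ sInf_le hx
  by_contra hdx
  exact hmX (le_antisymm hmx (hm.2 hdx hmx) ▸ hx)

theorem IsCompactElement.exists_maximal_not_le {d a : L} (hd : IsCompactElement d)
    (hda : ¬d ≤ a) : ∃ m, a ≤ m ∧ Maximal (fun x => ¬d ≤ x) m := by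
  refine zorn_le_nonempty₀ {x | ¬d ≤ x}
    (fun C hCs hC y hy => ⟨sSup C, ?_, fun z hz => le_sSup hz⟩) a hda
  intro hdC
  obtain ⟨z, hzC, hdz⟩ :=
    (isCompactElement_iff_le_of_directed_sSup_le L d).1 hd C ⟨y, hy⟩ hC.directedOn hdC
  exact hCs hzC hdz

theorem IsCompactElement.exists_completelyInfIrred {d a : L} (hd : IsCompactElement d)
    (hda : ¬d ≤ a) : ∃ m, CompletelyInfIrred m ∧ a ≤ m ∧ ¬d ≤ m := by
  obtain ⟨m, ham, hm⟩ := hd.exists_maximal_not_le hda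
  exact ⟨m, completelyInfIrred_of_maximal_not_le hm, ham, hm.prop⟩

section CompactlyGenerated

variable [IsCompactlyGenerated L]

theorem exists_compact_le_not_le {x a : L} (hxa : ¬x ≤ a) :
    ∃ c, IsCompactElement c ∧ c ≤ x ∧ ¬c ≤ a := by
  simpa [le_iff_compact_le_imp (a := x)] using hxa

theorem IsCompactElement.exists_compact_le_of_le_sup {k m c : L} (hk : IsCompactElement k)
    (h : k ≤ m ⊔ c) : ∃ b, IsCompactElement b ∧ b ≤ m ∧ k ≤ b ⊔ c := by
  set S := {b : L | IsCompactElement b ∧ b ≤ m}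
  have hS : S.Nonempty := ⟨⊥, isCompactElement_bot, bot_le⟩
  have hdir : DirectedOn (· ≤ ·) ((· ⊔ c) '' S) := by
    rintro - ⟨x, ⟨hx, hxm⟩, rfl⟩ - ⟨y, ⟨hy, hym⟩, rfl⟩
    exact ⟨x ⊔ y ⊔ c, ⟨x ⊔ y, ⟨hx.sup hy, sup_le hxm hym⟩, rfl⟩,
      sup_le_sup_right le_sup_left c, sup_le_sup_right le_sup_right c⟩
  have hsup : m ⊔ c = sSup ((· ⊔ c) '' S) := by
    rw [sSup_image, ← biSup_sup hS, ← sSup_eq_iSup, sSup_compact_le_eq]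
  obtain ⟨-, ⟨b, ⟨hb, hbm⟩, rfl⟩, hkb⟩ :=
    (isCompactElement_iff_le_of_directed_sSup_le L k).1 hk _ (hS.image _) hdir (h.trans hsup.le)
  exact ⟨b, hb, hbm, hkb⟩

variable {star : L → L}

theorem star_le_of_sup_eq_top
    (hleast : ∀ c b : L, IsCompactElement c → IsCompactElement b → c ⊔ b = ⊤ → star c ≤ b)
    (htop : IsCompactElement (⊤ : L)) {m c : L}
    (hc : IsCompactElement c) (hmc : m ⊔ c = ⊤) : star c ≤ m := by
  obtain ⟨b, hb, hbm, hcb⟩ := htop.exists_compact_le_of_le_sup hmc.ge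
  exact (hleast c b hc hb (top_le_iff.1 (hcb.trans_eq (sup_comm b c)))).trans hbm

theorem eq_or_eq_top_of_meetIrreducible_le
    (hjoin : ∀ c : L, IsCompactElement c → c ⊔ star c = ⊤)
    (hsplit : ∀ a c : L, IsCompactElement c → (a ⊔ c) ⊓ (a ⊔ star c) = a) {a : L}
    (ha : ∀ x y : L, a = x ⊓ y → a = x ∨ a = y) {x : L} (hax : a ≤ x) : x = a ∨ x = ⊤ := by
  refine or_iff_not_imp_left.2 fun hxa => ?_
  obtain ⟨c, hc, hcx, hca⟩ := exists_compact_le_not_le fun hxa' => hxa (hxa'.antisymm hax)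
  rcases ha _ _ (hsplit a c hc).symm with hac | hac
  · exact absurd (le_sup_right.trans hac.ge) hca
  · have hsca : star c ≤ a := le_sup_right.trans hac.ge
    exact top_le_iff.1 (hjoin c hc ▸ sup_le hcx (hsca.trans hax))

theorem sup_inf_sup_star_eq_of_completelyInfIrred_coatom
    (hleast : ∀ c b : L, IsCompactElement c → IsCompactElement b → c ⊔ b = ⊤ → star c ≤ b)
    (htop : IsCompactElement (⊤ : L))
    (hcoatom : ∀ m : L, CompletelyInfIrred m → ∀ x : L, m ≤ x → x = m ∨ x = ⊤)
    (a : L) {c : L} (hc : IsCompactElement c) : (a ⊔ c) ⊓ (a ⊔ star c) = a := by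
  refine le_antisymm ?_ (le_inf le_sup_left le_sup_left)
  by_contra hba
  obtain ⟨d, hd, hdb, hda⟩ := exists_compact_le_not_le hba
  obtain ⟨m, hm, ham, hdm⟩ := hd.exists_completelyInfIrred hda
  refine hdm (hdb.trans ?_)
  rcases hcoatom m hm (m ⊔ c) le_sup_left with hmc | hmc
  · exact inf_le_left.trans (sup_le ham (le_sup_right.trans hmc.le))
  · exact inf_le_right.trans (sup_le ham (star_le_of_sup_eq_top hleast htop hc hmc))

end CompactlyGenerated

end

/-- Equivalence of the three conditions characterizing the EML on algebraic lattices. -/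
theorem stmt_11 (L : Type*) [CompleteLattice L] [IsCompactlyGenerated L]
    (star : L → L)
    (hstar_cpt : ∀ c : L, IsCompactElement c → IsCompactElement (star c))
    (hjoin : ∀ c : L, IsCompactElement c → c ⊔ star c = ⊤)
    (hleast : ∀ c b : L, IsCompactElement c → IsCompactElement b → c ⊔ b = ⊤ → star c ≤ b) :
    List.TFAE
      [∀ a c : L, IsCompactElement c → (a ⊔ c) ⊓ (a ⊔ star c) = a,
       ∀ a : L, a ≠ ⊤ → (∀ x y : L, a = x ⊓ y → a = x ∨ a = y) →
          ∀ x : L, a ≤ x → x = a ∨ x = ⊤,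
       ∀ a : L, (∀ X : Set L, a = sInf X → a ∈ X) →
          ∀ x : L, a ≤ x → x = a ∨ x = ⊤] := by
  have htop : IsCompactElement (⊤ : L) := by
    rw [← hjoin ⊥ isCompactElement_bot, bot_sup_eq]
    exact hstar_cpt ⊥ isCompactElement_bot
  tfae_have 1 → 2 := fun h1 a _ ha _ hax => eq_or_eq_top_of_meetIrreducible_le hjoin h1 ha hax
  tfae_have 2 → 3 := fun h2 a ha =>
    h2 a (CompletelyInfIrred.ne_top ha) fun _ _ => CompletelyInfIrred.eq_or_eq_of_eq_inf ha
  tfae_have 3 → 1 := fun h3 a _ hc =>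
    sup_inf_sup_star_eq_of_completelyInfIrred_coatom hleast htop h3 a hc
  tfae_finish
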